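/- Let d ∈ ℕ and δ ∈ (0, π/2), and suppose N_{d,δ} > 0. Define F_{d,δ}(x) = ∫_{−π}^{π} M_{d,δ}(x') H(x − x') dx'. Then for every x ∈ ℝ with δ ≤ |x| ≤ π − δ, one has |F_{d,δ}(x) − H(x)| ≤ 4π / N_{d,δ}. -/

import Mathlib

open Real Classical

/-- The 2π-periodic Heaviside function: `H(x) = 1` for `x ∈ [2kπ, (2k+1)π)` and
`H(x) = 0` for `x ∈ [(2k−1)π, 2kπ)`, `k ∈ ℤ`. -/
noncomputable def Hper (x : ℝ) : ℝ :=
  if ∃ k : ℤ, 2 * k * π ≤ x ∧ x < (2 * k + 1) * π then 1 else 0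

/-- `g_{d,δ}(x) = T_d(1 + 2(cos x − cos δ)/(1 + cos δ))`. -/
noncomputable def chebG (d : ℕ) (δ x : ℝ) : ℝ :=
  (Polynomial.Chebyshev.T ℝ d).eval (1 + 2 * (Real.cos x - Real.cos δ) / (1 + Real.cos δ))

/-- `N_{d,δ} = ∫_{−π}^{π} g_{d,δ}(x) dx`. -/
noncomputable def chebN (d : ℕ) (δ : ℝ) : ℝ := ∫ x in (-π)..π, chebG d δ x

/-- `M_{d,δ} = g_{d,δ}/N_{d,δ}`. -/
noncomputable def chebM (d : ℕ) (δ x : ℝ) : ℝ := chebG d δ x / chebN d δ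

/-!
Since `M_{d,δ}` has unit mass, `F(x) - H(x) = ∫ M(x') (H(x - x') - H(x)) dx'`. For `|x'| < δ` the
bracket vanishes, because `x - x'` stays in the same half-period as `x`. For `δ ≤ |x'| ≤ π` the
argument of `T_d` lies in `[-1, 1]`, so `|M(x')| ≤ 1 / N`. Integrating over an interval of length
`2π` gives even the bound `2π / N`.
-/

open MeasureTheory Set

theorem IntervalIntegrable.mul_bdd {μ : Measure ℝ} {f g : ℝ → ℝ} {a b B : ℝ}
    (hf : IntervalIntegrable f μ a b) (hg : Measurable g) (hgB : ∀ y, ‖g y‖ ≤ B) :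
    IntervalIntegrable (fun y => f y * g y) μ a b :=
  ⟨hf.1.mul_bdd hg.aestronglyMeasurable (ae_of_all _ hgB),
    hf.2.mul_bdd hg.aestronglyMeasurable (ae_of_all _ hgB)⟩

theorem abs_integral_mul_sub_le {K f : ℝ → ℝ} {a b c C : ℝ} (hab : a ≤ b)
    (hK : IntervalIntegrable K volume a b) (hmass : ∫ y in a..b, K y = 1)
    (hKf : IntervalIntegrable (fun y => K y * f y) volume a b)
    (hC : ∀ y ∈ Ioc a b, |K y * (f y - c)| ≤ C) :
    |(∫ y in a..b, K y * f y) - c| ≤ C * (b - a) := by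
  have hc : (∫ y in a..b, K y * c) = c := by
    rw [intervalIntegral.integral_mul_const, hmass, one_mul]
  have hsub : (∫ y in a..b, K y * f y) - c = ∫ y in a..b, K y * (f y - c) := by
    simp only [mul_sub]
    rw [intervalIntegral.integral_sub hKf (hK.mul_const c), hc]
  rw [hsub, ← Real.norm_eq_abs, ← abs_of_nonneg (sub_nonneg.2 hab)]
  exact intervalIntegral.norm_integral_le_of_norm_le_const fun y hy =>
    hC y (by rwa [uIoc_of_le hab] at hy)

theorem Hper_eq_one_of_mem_Ico {y : ℝ} (hy : y ∈ Ico 0 π) : Hper y = 1 :=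
  if_pos ⟨0, by simpa using hy.1, by simpa using hy.2⟩

theorem Hper_eq_zero_of_mem_Ico {y : ℝ} (hy : y ∈ Ico (-π) 0) : Hper y = 0 := by
  refine if_neg ?_
  rintro ⟨k, hk1, hk2⟩
  have hπ := pi_pos
  obtain hk | hk := le_or_gt 0 k
  · have : (0 : ℝ) ≤ k := by exact_mod_cast hk
    nlinarith [hy.2]
  · have : (k : ℝ) ≤ -1 := by exact_mod_cast Int.le_sub_one_of_lt hk
    nlinarith [hy.1]

theorem Hper_eq_zero_or_eq_one (y : ℝ) : Hper y = 0 ∨ Hper y = 1 := by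
  unfold Hper; split <;> simp

theorem abs_Hper_le_one (y : ℝ) : |Hper y| ≤ 1 := by
  rcases Hper_eq_zero_or_eq_one y with h | h <;> simp [h]

theorem abs_Hper_sub_Hper_le_one (y z : ℝ) : |Hper y - Hper z| ≤ 1 := by
  rcases Hper_eq_zero_or_eq_one y with h | h <;> rcases Hper_eq_zero_or_eq_one z with h' | h' <;>
    simp [h, h']

theorem measurable_Hper : Measurable Hper := by
  refine Measurable.ite ?_ measurable_const measurable_const
  rw [ofPred_exists]
  exact MeasurableSet.iUnion fun k => measurableSet_Ico

theorem Hper_sub_eq_of_abs_lt {x y δ : ℝ} (hx1 : δ ≤ |x|) (hx2 : |x| ≤ π - δ) (hy : |y| < δ) :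
    Hper (x - y) = Hper x := by
  obtain ⟨hy1, hy2⟩ := abs_lt.1 hy
  rcases le_or_gt 0 x with hx | hx
  · rw [abs_of_nonneg hx] at hx1 hx2
    rw [Hper_eq_one_of_mem_Ico ⟨by linarith, by linarith⟩,
      Hper_eq_one_of_mem_Ico ⟨by linarith, by linarith⟩]
  · rw [abs_of_neg hx] at hx1 hx2
    rw [Hper_eq_zero_of_mem_Ico ⟨by linarith, by linarith⟩,
      Hper_eq_zero_of_mem_Ico ⟨by linarith, by linarith⟩]

theorem continuous_chebG (d : ℕ) (δ : ℝ) : Continuous (chebG d δ) :=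
  (Polynomial.continuous _).comp (by fun_prop)

theorem abs_chebG_le_one (d : ℕ) {δ x : ℝ} (hδ0 : 0 ≤ δ) (hδπ : δ < π)
    (hx1 : δ ≤ |x|) (hx2 : |x| ≤ π) : |chebG d δ x| ≤ 1 := by
  have hden : 0 < 1 + cos δ := by
    linarith [cos_pi, cos_lt_cos_of_nonneg_of_le_pi hδ0 le_rfl hδπ]
  have hcos : cos x ≤ cos δ := by
    rw [← cos_abs x]
    exact cos_le_cos_of_nonneg_of_le_pi hδ0 hx2 hx1
  refine Polynomial.Chebyshev.abs_eval_T_real_le_one d (abs_le.2 ⟨?_, ?_⟩)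
  · have : -2 * (1 + cos δ) ≤ 2 * (cos x - cos δ) := by linarith [neg_one_le_cos x]
    linarith [(le_div_iff₀ hden).2 this]
  · linarith [div_nonpos_of_nonpos_of_nonneg (by linarith : 2 * (cos x - cos δ) ≤ 0) hden.le]

theorem abs_chebM_mul_Hper_sub_le {d : ℕ} {δ x y : ℝ} (hδ0 : 0 ≤ δ) (hδπ : δ < π)
    (hN : 0 < chebN d δ) (hx1 : δ ≤ |x|) (hx2 : |x| ≤ π - δ) (hy : |y| ≤ π) :
    |chebM d δ y * (Hper (x - y) - Hper x)| ≤ 1 / chebN d δ := by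
  by_cases hyδ : |y| < δ
  · rw [Hper_sub_eq_of_abs_lt hx1 hx2 hyδ, sub_self, mul_zero, abs_zero]
    positivity
  · have hM : |chebM d δ y| ≤ 1 / chebN d δ := by
      rw [chebM, abs_div, abs_of_pos hN]
      gcongr
      exact abs_chebG_le_one d hδ0 hδπ (not_lt.1 hyδ) hy
    rw [abs_mul]
    exact (mul_le_of_le_one_right (abs_nonneg _) (abs_Hper_sub_Hper_le_one _ _)).trans hM

theorem stmt_5 (d : ℕ) (δ : ℝ) (hδ : δ ∈ Set.Ioo 0 (π / 2)) (hN : 0 < chebN d δ)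
    (x : ℝ) (hx1 : δ ≤ |x|) (hx2 : |x| ≤ π - δ) :
    |(∫ x' in (-π)..π, chebM d δ x' * Hper (x - x')) - Hper x| ≤ 4 * π / chebN d δ := by
  obtain ⟨hδ0, hδ2⟩ := hδ
  have hπ := pi_pos
  have hM : IntervalIntegrable (chebM d δ) volume (-π) π :=
    ((continuous_chebG d δ).div_const _).intervalIntegrable _ _
  have hmass : ∫ y in (-π)..π, chebM d δ y = 1 := by
    simp only [chebM, intervalIntegral.integral_div]
    exact div_self hN.ne'
  have hMH := hM.mul_bdd (g := fun y => Hper (x - y))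
    (measurable_Hper.comp (measurable_const.sub measurable_id)) fun y => abs_Hper_le_one _
  calc _ ≤ 1 / chebN d δ * (π - -π) :=
        abs_integral_mul_sub_le (by linarith) hM hmass hMH fun y hy =>
          abs_chebM_mul_Hper_sub_le hδ0.le (by linarith) hN hx1 hx2 (abs_le.2 ⟨hy.1.le, hy.2⟩)
    _ ≤ 4 * π / chebN d δ := by
        rw [one_div_mul_eq_div]
        gcongr
        linarith
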